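/- arXiv:1211.2899 — 5 statements merged into one kernel-verified Lean document; each statement's English description precedes it below -/
import Mathlib

section
/- For vectors X, Y in ℝ^n and p ≥ 2, the inequality ⟨X - Y, |X|^{p-2} X - |Y|^{p-2} Y⟩ ≥ C |X - Y|^p holds for some positive constant C depending only on p. -/
/-!
With `α = ‖x‖ ^ (p - 2)` and `β = ‖y‖ ^ (p - 2)`, the pairing `⟪x - y, α • x - β • y⟫` equals
`(α + β) / 2 * ‖x - y‖ ^ 2` plus `(α - β) * (‖x‖ ^ 2 - ‖y‖ ^ 2) / 2`, and the second term is
nonnegative because both factors vary in the same direction with the norms. The triangle inequality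
gives `‖x - y‖ ^ (p - 2) ≤ 2 ^ (p - 2) * (α + β)`, which trades the weight `α + β` for
`‖x - y‖ ^ (p - 2)` at the cost of the constant `2 ^ (1 - p)`.
-/

open scoped RealInnerProductSpace

lemma rpow_sub_rpow_mul_sq_sub_sq_nonneg {s a b : ℝ} (hs : 0 ≤ s) (ha : 0 ≤ a) (hb : 0 ≤ b) :
    0 ≤ (a ^ s - b ^ s) * (a ^ 2 - b ^ 2) :=
  ((Real.monotoneOn_rpow_Ici_of_exponent_nonneg hs).monovaryOn
    (pow_left_monotoneOn (M₀ := ℝ) (n := 2))).sub_mul_sub_nonneg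
      (Set.mem_Ici.2 hb) (Set.mem_Ici.2 ha)

lemma add_rpow_le_two_rpow_mul_add_rpow {s a b : ℝ} (hs : 0 ≤ s) (ha : 0 ≤ a) (hb : 0 ≤ b) :
    (a + b) ^ s ≤ 2 ^ s * (a ^ s + b ^ s) := by
  calc (a + b) ^ s ≤ (2 * max a b) ^ s := by gcongr; linarith [le_max_left a b, le_max_right a b]
    _ = 2 ^ s * max (a ^ s) (b ^ s) := by
      rw [Real.mul_rpow zero_le_two (by positivity), Real.rpow_max ha hb hs]
    _ ≤ 2 ^ s * (a ^ s + b ^ s) := by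
      gcongr
      exact max_le (le_add_of_nonneg_right (by positivity)) (le_add_of_nonneg_left (by positivity))

lemma norm_sub_rpow_le {E : Type*} [SeminormedAddCommGroup E] {s : ℝ} (hs : 0 ≤ s) (x y : E) :
    ‖x - y‖ ^ s ≤ 2 ^ s * (‖x‖ ^ s + ‖y‖ ^ s) :=
  (Real.rpow_le_rpow (norm_nonneg _) (norm_sub_le x y) hs).trans
    (add_rpow_le_two_rpow_mul_add_rpow hs (norm_nonneg x) (norm_nonneg y))

section InnerProductSpace

variable {E : Type*} [NormedAddCommGroup E] [InnerProductSpace ℝ E]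

lemma inner_sub_smul_sub_smul (x y : E) (α β : ℝ) :
    ⟪x - y, α • x - β • y⟫ =
      (α + β) / 2 * ‖x - y‖ ^ 2 + (α - β) * (‖x‖ ^ 2 - ‖y‖ ^ 2) / 2 := by
  rw [norm_sub_sq_real]
  simp only [inner_sub_left, inner_sub_right, real_inner_smul_right, real_inner_self_eq_norm_sq,
    real_inner_comm x y]
  ring

theorem two_rpow_one_sub_mul_norm_sub_rpow_le_inner {p : ℝ} (hp : 2 ≤ p) (x y : E) :
    2 ^ (1 - p) * ‖x - y‖ ^ p ≤ ⟪x - y, ‖x‖ ^ (p - 2) • x - ‖y‖ ^ (p - 2) • y⟫ := by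
  have hs : 0 ≤ p - 2 := by linarith
  have hsplit : ‖x - y‖ ^ p = ‖x - y‖ ^ (p - 2) * ‖x - y‖ ^ 2 := by
    rw [← Real.rpow_two, ← Real.rpow_add' (norm_nonneg _) (by linarith), sub_add_cancel]
  have hconst : (2 : ℝ) ^ (1 - p) * 2 ^ (p - 2) = 1 / 2 := by
    rw [← Real.rpow_add zero_lt_two, show 1 - p + (p - 2) = -1 by ring, Real.rpow_neg_one,
      one_div]
  calc 2 ^ (1 - p) * ‖x - y‖ ^ p
      ≤ 2 ^ (1 - p) * (2 ^ (p - 2) * (‖x‖ ^ (p - 2) + ‖y‖ ^ (p - 2))) * ‖x - y‖ ^ 2 := by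
        rw [hsplit, ← mul_assoc]; gcongr; exact norm_sub_rpow_le hs x y
    _ = (‖x‖ ^ (p - 2) + ‖y‖ ^ (p - 2)) / 2 * ‖x - y‖ ^ 2 := by
        rw [← mul_assoc, hconst]; ring
    _ ≤ ⟪x - y, ‖x‖ ^ (p - 2) • x - ‖y‖ ^ (p - 2) • y⟫ := by
        rw [inner_sub_smul_sub_smul]
        linarith [rpow_sub_rpow_mul_sq_sub_sq_nonneg hs (norm_nonneg x) (norm_nonneg y)]

end InnerProductSpace

/-- Monotonicity inequality for the p-Laplacian vector field, degenerate case p ≥ 2. -/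
theorem pLaplace_monotonicity_p_ge_two (p : ℝ) (hp : 2 ≤ p) :
    ∃ C : ℝ, 0 < C ∧ ∀ (n : ℕ) (X Y : EuclideanSpace ℝ (Fin n)),
      C * ‖X - Y‖ ^ p ≤ ⟪X - Y, ‖X‖ ^ (p - 2) • X - ‖Y‖ ^ (p - 2) • Y⟫ :=
  ⟨2 ^ (1 - p), by positivity, fun _ X Y => two_rpow_one_sub_mul_norm_sub_rpow_le_inner hp X Y⟩
end

section
/- For vectors X, Y in ℝ^n and 1 < p < 2, the inequality ⟨X - Y, |X|^{p-2} X - |Y|^{p-2} Y⟩ ≥ C (p-1) |X - Y|^2 / (1 + |X|^2 + |Y|^2)^{(2-p)/2} holds for some positive constant C depending only on p, where the left-hand side is interpreted as 0 at X = 0 or Y = 0 in the factor |X|^{p-2}X (i.e. |0|^{p-2}·0 := 0). -/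
/-!
Write `s = ‖X‖`, `t = ‖Y‖`. Expanding the inner product and using `⟪X, Y⟫ ≤ s t` reduces the
monotonicity inequality to the scalar inequality
`(p - 1) (s - t)² (s + t)^(p-2) ≤ (s - t) (s^(p-1) - t^(p-1))`,
which follows from concavity of `x ↦ x^(p-1)` (its graph lies below its tangent lines).
Finally `(s + t)² ≤ 2 (1 + s² + t²)` turns the weight `(s + t)^(p-2)` into
`2^((p-2)/2) (1 + s² + t²)^((p-2)/2)`.
-/

open scoped RealInnerProductSpace

namespace Real

theorem rpow_le_rpow_add_mul_rpow_sub_one_mul_sub {q s t : ℝ} (hq₀ : 0 ≤ q) (hq₁ : q ≤ 1)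
    (hs : 0 < s) (ht : 0 ≤ t) : t ^ q ≤ s ^ q + q * s ^ (q - 1) * (t - s) := by
  have hbern : (t / s) ^ q ≤ 1 + q * (t / s - 1) := by
    simpa using rpow_one_add_le_one_add_mul_self (s := t / s - 1)
      (by linarith [div_nonneg ht hs.le]) hq₀ hq₁
  calc t ^ q = s ^ q * (t / s) ^ q := by
        rw [div_rpow ht hs.le, mul_div_cancel₀ _ (rpow_pos_of_pos hs q).ne']
    _ ≤ s ^ q * (1 + q * (t / s - 1)) := by gcongr
    _ = s ^ q + q * s ^ (q - 1) * (t - s) := by rw [rpow_sub_one hs.ne']; field_simp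

theorem mul_sub_sq_mul_add_rpow_sub_one_le {q s t : ℝ} (hq₀ : 0 ≤ q) (hq₁ : q ≤ 1)
    (hs : 0 ≤ s) (ht : 0 ≤ t) : q * (s - t) ^ 2 * (s + t) ^ (q - 1) ≤ (s - t) * (s ^ q - t ^ q) := by
  wlog hts : t ≤ s generalizing s t
  · have := this ht hs (le_of_not_ge hts)
    rw [add_comm t s] at this
    linarith
  rcases hs.eq_or_lt with rfl | hs
  · simp [le_antisymm hts ht]
  have htangent := rpow_le_rpow_add_mul_rpow_sub_one_mul_sub hq₀ hq₁ hs ht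
  have hweight : (s + t) ^ (q - 1) ≤ s ^ (q - 1) :=
    rpow_le_rpow_of_nonpos hs (by linarith) (by linarith)
  have hst : 0 ≤ s - t := by linarith
  calc q * (s - t) ^ 2 * (s + t) ^ (q - 1) ≤ q * (s - t) ^ 2 * s ^ (q - 1) := by gcongr
    _ ≤ (s - t) * (s ^ q - t ^ q) := by nlinarith [mul_le_mul_of_nonneg_left htangent hst]

theorem two_rpow_div_rpow_le_add_rpow {p s t : ℝ} (hp : p ≤ 2) (hst : 0 < s + t) :
    (2 : ℝ) ^ ((p - 2) / 2) / (1 + s ^ 2 + t ^ 2) ^ ((2 - p) / 2) ≤ (s + t) ^ (p - 2) := by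
  have hw : 0 ≤ 1 + s ^ 2 + t ^ 2 := by positivity
  calc (2 : ℝ) ^ ((p - 2) / 2) / (1 + s ^ 2 + t ^ 2) ^ ((2 - p) / 2)
      = (2 * (1 + s ^ 2 + t ^ 2)) ^ ((p - 2) / 2) := by
        rw [mul_rpow zero_le_two hw, show (2 - p) / 2 = -((p - 2) / 2) by ring, rpow_neg hw,
          div_inv_eq_mul]
    _ ≤ ((s + t) ^ 2) ^ ((p - 2) / 2) :=
        rpow_le_rpow_of_nonpos (by positivity) (by nlinarith [sq_nonneg (s - t)]) (by linarith)
    _ = (s + t) ^ (p - 2) := by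
        rw [← rpow_natCast_mul hst.le]
        norm_num [mul_div_cancel₀]

end Real

theorem ite_zero_smul_self {R M : Type*} [Zero M] [SMulZeroClass R M] (c : R) (x : M)
    [Decidable (x = 0)] : (if x = 0 then 0 else c • x) = c • x := by
  split_ifs with h <;> simp [h]

section InnerProductSpace

variable {E : Type*} [NormedAddCommGroup E] [InnerProductSpace ℝ E]

theorem mul_norm_sub_sq_le_inner_sub_smul_sub_smul (X Y : E) {a b c : ℝ} (habc : 2 * c ≤ a + b)
    (hnorm : c * (‖X‖ - ‖Y‖) ^ 2 ≤ (‖X‖ - ‖Y‖) * (a * ‖X‖ - b * ‖Y‖)) :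
    c * ‖X - Y‖ ^ 2 ≤ ⟪X - Y, a • X - b • Y⟫ := by
  have hinner : ⟪X - Y, a • X - b • Y⟫ = a * ‖X‖ ^ 2 + b * ‖Y‖ ^ 2 - (a + b) * ⟪X, Y⟫ := by
    simp only [inner_sub_left, inner_sub_right, real_inner_smul_right,
      real_inner_self_eq_norm_sq, real_inner_comm X Y]
    ring
  rw [hinner, norm_sub_sq_real]
  nlinarith [mul_le_mul_of_nonneg_left (real_inner_le_norm X Y) (sub_nonneg.2 habc)]

theorem mul_norm_sub_sq_mul_rpow_le_inner_rpow_smul_sub {p : ℝ} (hp₁ : 1 < p) (hp₂ : p ≤ 2)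
    (X Y : E) :
    (p - 1) * ‖X - Y‖ ^ 2 * (‖X‖ + ‖Y‖) ^ (p - 2)
      ≤ ⟪X - Y, ‖X‖ ^ (p - 2) • X - ‖Y‖ ^ (p - 2) • Y⟫ := by
  -- At `X = 0` the coefficient `‖X‖ ^ (p - 2)` is the junk value `0`, too small for `habc`.
  rcases eq_or_ne X 0 with rfl | hX
  · have : 0 ≤ ‖Y‖ ^ (p - 2) * ‖Y‖ ^ 2 := by positivity
    simp [inner_neg_left, real_inner_smul_right]
    nlinarith
  rcases eq_or_ne Y 0 with rfl | hY
  · have : 0 ≤ ‖X‖ ^ (p - 2) * ‖X‖ ^ 2 := by positivity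
    simp [real_inner_smul_right]
    nlinarith
  have hs := norm_pos_iff.2 hX
  have ht := norm_pos_iff.2 hY
  set w := (‖X‖ + ‖Y‖) ^ (p - 2)
  have hws : w ≤ ‖X‖ ^ (p - 2) := Real.rpow_le_rpow_of_nonpos hs (by linarith) (by linarith)
  have hwt : w ≤ ‖Y‖ ^ (p - 2) := Real.rpow_le_rpow_of_nonpos ht (by linarith) (by linarith)
  have hw : 0 ≤ w := by positivity
  rw [mul_right_comm]
  refine mul_norm_sub_sq_le_inner_sub_smul_sub_smul X Y (by nlinarith) ?_
  have hrpow (s : ℝ) (hs : 0 ≤ s) : s ^ (p - 1) = s ^ (p - 2) * s := by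
    rw [← Real.rpow_add_one' hs (by linarith)]; ring_nf
  have := Real.mul_sub_sq_mul_add_rpow_sub_one_le (q := p - 1) (by linarith) (by linarith)
    hs.le ht.le
  rw [hrpow _ hs.le, hrpow _ ht.le, show p - 1 - 1 = p - 2 by ring] at this
  linarith

end InnerProductSpace

/-- Monotonicity inequality for the p-Laplacian vector field, singular case 1 < p < 2,
with the vector field `X ↦ |X|^(p-2) X` extended by `0` at the origin. -/
theorem pLaplace_monotonicity_p_lt_two (p : ℝ) (hp1 : 1 < p) (hp2 : p < 2) :
    ∃ C : ℝ, 0 < C ∧ ∀ (n : ℕ) (X Y : EuclideanSpace ℝ (Fin n)),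
      C * (p - 1) * ‖X - Y‖ ^ 2 / (1 + ‖X‖ ^ 2 + ‖Y‖ ^ 2) ^ ((2 - p) / 2)
        ≤ ⟪X - Y, (if X = 0 then 0 else ‖X‖ ^ (p - 2) • X)
            - (if Y = 0 then 0 else ‖Y‖ ^ (p - 2) • Y)⟫ := by
  refine ⟨2 ^ ((p - 2) / 2), by positivity, fun n X Y => ?_⟩
  rw [ite_zero_smul_self _ X, ite_zero_smul_self _ Y]
  by_cases hXY : X = 0 ∧ Y = 0
  · obtain ⟨rfl, rfl⟩ := hXY
    simp
  have hst : 0 < ‖X‖ + ‖Y‖ := by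
    rw [not_and_or] at hXY
    rcases hXY with h | h <;> positivity
  calc 2 ^ ((p - 2) / 2) * (p - 1) * ‖X - Y‖ ^ 2 / (1 + ‖X‖ ^ 2 + ‖Y‖ ^ 2) ^ ((2 - p) / 2)
      = 2 ^ ((p - 2) / 2) / (1 + ‖X‖ ^ 2 + ‖Y‖ ^ 2) ^ ((2 - p) / 2) * ((p - 1) * ‖X - Y‖ ^ 2) := by
        ring
    _ ≤ (‖X‖ + ‖Y‖) ^ (p - 2) * ((p - 1) * ‖X - Y‖ ^ 2) := by
        have : 0 ≤ (p - 1) * ‖X - Y‖ ^ 2 := by nlinarith [sq_nonneg ‖X - Y‖]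
        exact mul_le_mul_of_nonneg_right (Real.two_rpow_div_rpow_le_add_rpow hp2.le hst) this
    _ = (p - 1) * ‖X - Y‖ ^ 2 * (‖X‖ + ‖Y‖) ^ (p - 2) := by ring
    _ ≤ _ := mul_norm_sub_sq_mul_rpow_le_inner_rpow_smul_sub hp1 hp2.le X Y
end

section
/- Let m ≥ 2 and let A = (a_{ij}) be a symmetric m × m real matrix whose trace satisfies tr(A) = -(p-2) a_{11} for some p > 1. Then the Frobenius norm of A satisfies ∑_{i,j} a_{ij}^2 ≥ (1 + κ) ∑_j a_{1j}^2, where κ = min{(p-1)^2/(m-1), 1}. -/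
/-!
Split off the distinguished row `i₀`. Each other row `i` contains the entries `aᵢᵢ₀ = aᵢ₀ᵢ`
and `aᵢᵢ`, so the Frobenius norm is at least `∑ⱼ a²ᵢ₀ⱼ + ∑_{j ≠ i₀} a²ᵢ₀ⱼ + ∑_{i ≠ i₀} a²ᵢᵢ`.
The trace condition says `∑_{i ≠ i₀} aᵢᵢ = -(p-1) aᵢ₀ᵢ₀`, so by Cauchy–Schwarz the last sum is
at least `(p-1)² a²ᵢ₀ᵢ₀ / (m-1)`. Hence the first row gains `κ a²ᵢ₀ᵢ₀` from the diagonal and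
`κ ∑_{j ≠ i₀} a²ᵢ₀ⱼ` from the other rows, since `κ` is at most both `(p-1)²/(m-1)` and `1`.
-/

open Finset

namespace Matrix

variable {ι : Type*} [Fintype ι] [DecidableEq ι]

theorem trace_sub_diag_eq_sum_erase (A : Matrix ι ι ℝ) (i₀ : ι) :
    A.trace - A i₀ i₀ = ∑ i ∈ univ.erase i₀, A i i := by
  rw [trace, ← add_sum_erase _ _ (mem_univ i₀)]
  simp only [diag_apply, add_sub_cancel_left]

theorem sq_trace_sub_diag_div_le_sum_erase_sq_diag (A : Matrix ι ι ℝ) (i₀ : ι) :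
    (A.trace - A i₀ i₀) ^ 2 / (Fintype.card ι - 1) ≤ ∑ i ∈ univ.erase i₀, A i i ^ 2 := by
  have hcard : ((univ.erase i₀).card : ℝ) = Fintype.card ι - 1 := by
    rw [card_erase_of_mem (mem_univ i₀), card_univ,
      Nat.cast_pred (Fintype.card_pos_iff.mpr ⟨i₀⟩)]
  rw [trace_sub_diag_eq_sum_erase, ← hcard]
  exact div_le_of_le_mul₀ (Nat.cast_nonneg _) (sum_nonneg fun i _ => sq_nonneg _)
    (by rw [mul_comm]; exact sq_sum_le_card_mul_sum_sq)

theorem IsSymm.sum_sq_row_add_sum_erase_le_sum_sq {A : Matrix ι ι ℝ} (hA : A.IsSymm) (i₀ : ι) :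
    ∑ j, A i₀ j ^ 2 + ∑ i ∈ univ.erase i₀, (A i₀ i ^ 2 + A i i ^ 2) ≤ ∑ i, ∑ j, A i j ^ 2 := by
  rw [← add_sum_erase univ (fun i => ∑ j, A i j ^ 2) (mem_univ i₀)]
  gcongr with i hi
  have hsub : ({i₀, i} : Finset ι) ⊆ univ := subset_univ _
  calc A i₀ i ^ 2 + A i i ^ 2 = ∑ j ∈ {i₀, i}, A i j ^ 2 := by
        rw [sum_pair (ne_of_mem_erase hi).symm, hA.apply]
    _ ≤ ∑ j, A i j ^ 2 := sum_le_sum_of_subset_of_nonneg hsub fun j _ _ => sq_nonneg _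

theorem IsSymm.sum_sq_row_add_le_sum_sq {A : Matrix ι ι ℝ} (hA : A.IsSymm) (i₀ : ι) :
    ∑ j, A i₀ j ^ 2 + ∑ j ∈ univ.erase i₀, A i₀ j ^ 2
        + (A.trace - A i₀ i₀) ^ 2 / (Fintype.card ι - 1) ≤ ∑ i, ∑ j, A i j ^ 2 := by
  have h := hA.sum_sq_row_add_sum_erase_le_sum_sq i₀
  rw [sum_add_distrib] at h
  linarith [sq_trace_sub_diag_div_le_sum_erase_sq_diag A i₀]

end Matrix

theorem one_add_min_mul_le {a R c : ℝ} (hR : 0 ≤ R) :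
    (1 + min c 1) * (a ^ 2 + R) ≤ a ^ 2 + R + R + c * a ^ 2 := by
  nlinarith [mul_le_mul_of_nonneg_right (min_le_left c 1) (sq_nonneg a),
    mul_le_mul_of_nonneg_right (min_le_right c 1) hR]

/-- Linear-algebra core of the refined Kato inequality for p-harmonic functions:
if a symmetric `m × m` matrix `A` satisfies `tr A = -(p-2) a₁₁`, then
`∑ aᵢⱼ² ≥ (1 + κ) ∑ a₁ⱼ²` with `κ = min ((p-1)²/(m-1)) 1`. -/
theorem kato_matrix_inequality (m : ℕ) (hm : 2 ≤ m) (p : ℝ)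
    (A : Matrix (Fin m) (Fin m) ℝ) (hA : A.IsSymm)
    (htr : A.trace = -(p - 2) * A ⟨0, by omega⟩ ⟨0, by omega⟩) :
    (1 + min ((p - 1) ^ 2 / ((m : ℝ) - 1)) 1) * ∑ j, A ⟨0, by omega⟩ j ^ 2
      ≤ ∑ i, ∑ j, A i j ^ 2 := by
  set i₀ : Fin m := ⟨0, by omega⟩
  have hbound := hA.sum_sq_row_add_le_sum_sq i₀
  have hdiag : (A.trace - A i₀ i₀) ^ 2 / (Fintype.card (Fin m) - 1)
      = (p - 1) ^ 2 / ((m : ℝ) - 1) * A i₀ i₀ ^ 2 := by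
    rw [htr, Fintype.card_fin]
    ring
  have hrow : ∑ j, A i₀ j ^ 2 = A i₀ i₀ ^ 2 + ∑ j ∈ univ.erase i₀, A i₀ j ^ 2 :=
    (add_sum_erase _ _ (mem_univ i₀)).symm
  rw [hdiag, hrow] at hbound
  rw [hrow]
  have hrest : 0 ≤ ∑ j ∈ univ.erase i₀, A i₀ j ^ 2 := sum_nonneg fun j _ => sq_nonneg _
  linarith [one_add_min_mul_le (a := A i₀ i₀) (c := (p - 1) ^ 2 / ((m : ℝ) - 1)) hrest]
end

section
/- Let p > 1, m ≥ 2 with p ≠ m. Then u(x) = |x|^{(p-m)/(p-1)} on ℝ^m \ {0} is p-harmonic, i.e. div(|∇u|^{p-2}∇u) = 0, and satisfies |∇²u|² = (1 + (p-1)²/(m-1)) · |∇|∇u||². -/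
/-!
Write `r = ‖x‖` and `α = (p - m) / (p - 1)`, so `u = r ^ α` and `∇u = α r ^ (α - 2) x`.
The `p`-flux `|∇u| ^ (p - 2) ∇u` is a constant multiple of `r ^ (α (p - 1) - p) x = r ^ (-m) x`,
and a radial field `r ^ β x` has divergence `(m + β) r ^ β`, which vanishes for `β = -m`.
The Hessian is `α r ^ (α - 2) (I + (α - 2) x xᵀ / r²)`, with eigenvalue `α (α - 1) r ^ (α - 2)` in
the radial direction and `α r ^ (α - 2)` on its orthogonal complement, so
`|∇²u|² = α² ((α - 1)² + m - 1) r ^ (2α - 4)`, while `|∇|∇u||² = α² (α - 1)² r ^ (2α - 4)`.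
The choice of `α` gives `(α - 1)² = (m - 1)² / (p - 1)²`, which is exactly the Kato constant.
-/

open scoped RealInnerProductSpace

/-- The `i`-th standard basis vector of `ℝ^m`. -/
noncomputable def stdVec (m : ℕ) (i : Fin m) : EuclideanSpace ℝ (Fin m) :=
  EuclideanSpace.single i 1

/-- Divergence of a vector field on `ℝ^m`. -/
noncomputable def diverg {m : ℕ}
    (F : EuclideanSpace ℝ (Fin m) → EuclideanSpace ℝ (Fin m))
    (x : EuclideanSpace ℝ (Fin m)) : ℝ :=
  ∑ i, ⟪fderiv ℝ F x (stdVec m i), stdVec m i⟫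

/-- `(i,j)`-entry of the Hessian of `u : ℝ^m → ℝ`. -/
noncomputable def hessEntry {m : ℕ} (u : EuclideanSpace ℝ (Fin m) → ℝ)
    (x : EuclideanSpace ℝ (Fin m)) (i j : Fin m) : ℝ :=
  fderiv ℝ (fun y => ⟪gradient u y, stdVec m j⟫) x (stdVec m i)

open InnerProductSpace Filter Topology

section NormRpow

variable {E : Type*} [NormedAddCommGroup E] [InnerProductSpace ℝ E] {x : E}

theorem hasFDerivAt_norm_rpow_of_ne_zero (α : ℝ) (hx : x ≠ 0) :
    HasFDerivAt (fun z : E => ‖z‖ ^ α) ((α * ‖x‖ ^ (α - 2)) • innerSL ℝ x) x := by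
  convert ((hasStrictFDerivAt_norm_sq x).rpow_const (p := α / 2) (by simp [hx])).hasFDerivAt
    using 1
  · ext z
    rw [← Real.rpow_natCast_mul (norm_nonneg _)]
    ring_nf
  · simp_rw [← Real.rpow_natCast_mul (norm_nonneg _), ← Nat.cast_smul_eq_nsmul ℝ, smul_smul]
    ring_nf

theorem hasFDerivAt_norm_rpow_smul (β : ℝ) (hx : x ≠ 0) :
    HasFDerivAt (fun y : E => ‖y‖ ^ β • y)
      (‖x‖ ^ β • ContinuousLinearMap.id ℝ E
        + ((β * ‖x‖ ^ (β - 2)) • innerSL ℝ x).smulRight x) x :=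
  (hasFDerivAt_norm_rpow_of_ne_zero β hx).smul (hasFDerivAt_id x)

variable [CompleteSpace E]

theorem HasGradientAt.const_mul {f : E → ℝ} {f' : E} (c : ℝ) (hf : HasGradientAt f f' x) :
    HasGradientAt (fun y => c * f y) (c • f') x := by
  rw [hasGradientAt_iff_hasFDerivAt] at hf ⊢
  simpa using hf.const_mul c

theorem hasGradientAt_norm_rpow_of_ne_zero (α : ℝ) (hx : x ≠ 0) :
    HasGradientAt (fun z : E => ‖z‖ ^ α) ((α * ‖x‖ ^ (α - 2)) • x) x := by
  rw [hasGradientAt_iff_hasFDerivAt]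
  refine (hasFDerivAt_norm_rpow_of_ne_zero α hx).congr_fderiv ?_
  ext v
  simp [toDual_apply_apply]

theorem gradient_norm_rpow_eventuallyEq (α : ℝ) (hx : x ≠ 0) :
    gradient (fun z : E => ‖z‖ ^ α) =ᶠ[𝓝 x] fun y => α • (‖y‖ ^ (α - 2) • y) := by
  filter_upwards [eventually_ne_nhds hx] with y hy
  rw [(hasGradientAt_norm_rpow_of_ne_zero α hy).gradient, smul_smul]

theorem norm_gradient_norm_rpow (α : ℝ) (hx : x ≠ 0) :
    ‖gradient (fun z : E => ‖z‖ ^ α) x‖ = |α| * ‖x‖ ^ (α - 1) := by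
  have hx' : 0 < ‖x‖ := norm_pos_iff.2 hx
  rw [(hasGradientAt_norm_rpow_of_ne_zero α hx).gradient, norm_smul, Real.norm_eq_abs, abs_mul,
    abs_of_pos (Real.rpow_pos_of_pos hx' _), mul_assoc, ← Real.rpow_add_one hx'.ne']
  ring_nf

theorem norm_gradient_rpow_smul_gradient_norm_rpow (α p : ℝ) (hx : x ≠ 0) :
    ‖gradient (fun z : E => ‖z‖ ^ α) x‖ ^ (p - 2) • gradient (fun z : E => ‖z‖ ^ α) x
      = (|α| ^ (p - 2) * α) • (‖x‖ ^ (α * (p - 1) - p) • x) := by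
  have hx' : 0 < ‖x‖ := norm_pos_iff.2 hx
  rw [norm_gradient_norm_rpow α hx, (hasGradientAt_norm_rpow_of_ne_zero α hx).gradient,
    smul_smul, smul_smul, Real.mul_rpow (abs_nonneg α) (Real.rpow_nonneg hx'.le _),
    ← Real.rpow_mul hx'.le]
  congr 1
  rw [show α * (p - 1) - p = (α - 1) * (p - 2) + (α - 2) by ring, Real.rpow_add hx']
  ring

theorem norm_gradient_norm_gradient_norm_rpow (α : ℝ) (hx : x ≠ 0) :
    ‖gradient (fun y => ‖gradient (fun z : E => ‖z‖ ^ α) y‖) x‖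
      = |α| * |α - 1| * ‖x‖ ^ (α - 2) := by
  have hx' : 0 < ‖x‖ := norm_pos_iff.2 hx
  have hnear : (fun y => ‖gradient (fun z : E => ‖z‖ ^ α) y‖) =ᶠ[𝓝 x]
      fun y => |α| * ‖y‖ ^ (α - 1) := by
    filter_upwards [eventually_ne_nhds hx] with y hy
    exact norm_gradient_norm_rpow α hy
  rw [hnear.gradient_eq, ((hasGradientAt_norm_rpow_of_ne_zero (α - 1) hx).const_mul |α|).gradient,
    norm_smul, norm_smul, Real.norm_eq_abs, Real.norm_eq_abs, abs_mul, abs_abs,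
    abs_of_pos (Real.rpow_pos_of_pos hx' _), mul_assoc |α - 1|, ← Real.rpow_add_one hx'.ne']
  ring_nf

end NormRpow

section Euclidean

variable {m : ℕ}

theorem inner_stdVec_right (v : EuclideanSpace ℝ (Fin m)) (i : Fin m) :
    ⟪v, stdVec m i⟫ = v i := by
  simp [stdVec, EuclideanSpace.inner_single_right]

theorem inner_stdVec_stdVec (i j : Fin m) :
    ⟪stdVec m i, stdVec m j⟫ = if i = j then 1 else 0 := by
  rw [inner_stdVec_right]
  simp [stdVec, PiLp.single_apply, eq_comm]

theorem sum_sq_apply (x : EuclideanSpace ℝ (Fin m)) : ∑ i, x i ^ 2 = ‖x‖ ^ 2 := by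
  simp [EuclideanSpace.real_norm_sq_eq]

theorem inner_fderiv_norm_rpow_smul_stdVec (β : ℝ) {x : EuclideanSpace ℝ (Fin m)} (hx : x ≠ 0)
    (i j : Fin m) :
    ⟪fderiv ℝ (fun y => ‖y‖ ^ β • y) x (stdVec m i), stdVec m j⟫
      = ‖x‖ ^ β * (if i = j then 1 else 0) + β * ‖x‖ ^ (β - 2) * (x i * x j) := by
  simp only [(hasFDerivAt_norm_rpow_smul β hx).fderiv, add_apply, smul_apply,
    ContinuousLinearMap.id_apply, ContinuousLinearMap.smulRight_apply, innerSL_apply_apply,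
    inner_add_left, real_inner_smul_left, inner_stdVec_stdVec]
  simp only [inner_stdVec_right]
  ring

theorem diverg_congr {F G : EuclideanSpace ℝ (Fin m) → EuclideanSpace ℝ (Fin m)}
    {x : EuclideanSpace ℝ (Fin m)} (h : F =ᶠ[𝓝 x] G) : diverg F x = diverg G x := by
  simp only [diverg, h.fderiv_eq]

theorem diverg_const_smul {F : EuclideanSpace ℝ (Fin m) → EuclideanSpace ℝ (Fin m)}
    {x : EuclideanSpace ℝ (Fin m)} (c : ℝ) (hF : DifferentiableAt ℝ F x) :
    diverg (fun y => c • F y) x = c * diverg F x := by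
  simp [diverg, fderiv_fun_const_smul hF, real_inner_smul_left, Finset.mul_sum]

theorem diverg_norm_rpow_smul (β : ℝ) {x : EuclideanSpace ℝ (Fin m)} (hx : x ≠ 0) :
    diverg (fun y => ‖y‖ ^ β • y) x = (m + β) * ‖x‖ ^ β := by
  have hx' : 0 < ‖x‖ := norm_pos_iff.2 hx
  simp only [diverg, inner_fderiv_norm_rpow_smul_stdVec β hx, if_pos, Finset.sum_add_distrib,
    ← sq, ← Finset.mul_sum, sum_sq_apply, Finset.sum_const, Finset.card_univ, Fintype.card_fin,
    nsmul_eq_mul, mul_one]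
  rw [Real.rpow_sub hx', Real.rpow_two]
  field_simp

theorem hessEntry_eq_inner_fderiv_gradient {u : EuclideanSpace ℝ (Fin m) → ℝ}
    {x : EuclideanSpace ℝ (Fin m)} (h : DifferentiableAt ℝ (gradient u) x) (i j : Fin m) :
    hessEntry u x i j = ⟪fderiv ℝ (gradient u) x (stdVec m i), stdVec m j⟫ := by
  rw [hessEntry, (h.hasFDerivAt.inner ℝ (hasFDerivAt_const (stdVec m j) x)).fderiv]
  simp

theorem hessEntry_norm_rpow (α : ℝ) {x : EuclideanSpace ℝ (Fin m)} (hx : x ≠ 0) (i j : Fin m) :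
    hessEntry (fun z => ‖z‖ ^ α) x i j
      = α * (‖x‖ ^ (α - 2) * (if i = j then 1 else 0) + (α - 2) * ‖x‖ ^ (α - 4) * (x i * x j)) := by
  have hgrad := gradient_norm_rpow_eventuallyEq α hx
  have hdiff := (hasFDerivAt_norm_rpow_smul (α - 2) hx).differentiableAt
  rw [hessEntry_eq_inner_fderiv_gradient (hdiff.const_smul α |>.congr_of_eventuallyEq hgrad),
    hgrad.fderiv_eq, fderiv_fun_const_smul hdiff, smul_apply, real_inner_smul_left,
    inner_fderiv_norm_rpow_smul_stdVec _ hx]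
  ring_nf

theorem sum_sum_sq_ite_add_mul (a b : ℝ) (x : EuclideanSpace ℝ (Fin m)) :
    ∑ i, ∑ j, (a * (if i = j then 1 else 0) + b * (x i * x j)) ^ 2
      = m * a ^ 2 + 2 * a * (b * ‖x‖ ^ 2) + (b * ‖x‖ ^ 2) ^ 2 := by
  have hrow : ∀ i, ∑ j, (a * (if i = j then 1 else 0) + b * (x i * x j)) ^ 2
      = a ^ 2 + 2 * a * b * x i ^ 2 + b ^ 2 * ‖x‖ ^ 2 * x i ^ 2 := by
    intro i
    simp only [add_sq, mul_pow, Finset.sum_add_distrib]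
    simp only [ite_pow, one_pow, ne_eq, OfNat.ofNat_ne_zero, not_false_eq_true, zero_pow, mul_ite,
      mul_one, mul_zero, Finset.sum_ite_eq, Finset.mem_univ, ↓reduceIte, ite_mul, zero_mul,
      ← Finset.mul_sum, sum_sq_apply]
    ring
  simp only [hrow, Finset.sum_add_distrib, ← Finset.mul_sum, sum_sq_apply, Finset.sum_const,
    Finset.card_univ, Fintype.card_fin, nsmul_eq_mul]
  ring

theorem sum_sum_sq_hessEntry_norm_rpow (α : ℝ) {x : EuclideanSpace ℝ (Fin m)}
    (hx : x ≠ 0) :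
    ∑ i, ∑ j, hessEntry (fun z => ‖z‖ ^ α) x i j ^ 2
      = α ^ 2 * ((α - 1) ^ 2 + m - 1) * (‖x‖ ^ (α - 2)) ^ 2 := by
  have hx' : 0 < ‖x‖ := norm_pos_iff.2 hx
  have hpow : ‖x‖ ^ (α - 4) * ‖x‖ ^ 2 = ‖x‖ ^ (α - 2) := by
    rw [← Real.rpow_two, ← Real.rpow_add hx']
    ring_nf
  simp only [hessEntry_norm_rpow α hx, mul_pow, ← Finset.mul_sum]
  rw [sum_sum_sq_ite_add_mul, mul_assoc (α - 2), hpow]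
  ring

end Euclidean

theorem power_norm_p_harmonic_and_kato_equality_general (m : ℕ) (p : ℝ)
    (hp : 1 < p)
    (x : EuclideanSpace ℝ (Fin m)) (hx : x ≠ 0) :
    diverg (fun y =>
        ‖gradient (fun z : EuclideanSpace ℝ (Fin m) => ‖z‖ ^ ((p - m) / (p - 1))) y‖ ^ (p - 2)
        • gradient (fun z : EuclideanSpace ℝ (Fin m) => ‖z‖ ^ ((p - m) / (p - 1))) y) x = 0 ∧
    ∑ i, ∑ j,
        hessEntry (fun z : EuclideanSpace ℝ (Fin m) => ‖z‖ ^ ((p - m) / (p - 1))) x i j ^ 2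
      = (1 + (p - 1) ^ 2 / ((m : ℝ) - 1)) * ‖gradient
          (fun y => ‖gradient
            (fun z : EuclideanSpace ℝ (Fin m) => ‖z‖ ^ ((p - m) / (p - 1))) y‖) x‖ ^ 2 := by
  have hp1 : p - 1 ≠ 0 := sub_ne_zero.2 hp.ne'
  have hα_sub_one : (p - m) / (p - 1) - 1 = (1 - m) / (p - 1) := by
    rw [div_sub_one hp1]
    ring
  -- also for `m = 1`, where `(m - 1) ^ 2 / (m - 1) = 0 / 0 = 0`
  have hkato : (p - 1) ^ 2 / ((m : ℝ) - 1) * ((p - m) / (p - 1) - 1) ^ 2 = m - 1 := by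
    rw [hα_sub_one, div_pow, ← neg_sub (m : ℝ), neg_sq, div_mul_div_comm, mul_comm ((p - 1) ^ 2),
      mul_div_mul_right _ _ (pow_ne_zero 2 hp1), sq, mul_self_div_self]
  have hexp : (p - m) / (p - 1) * (p - 1) - p = -m := by
    rw [div_mul_cancel₀ _ hp1]
    ring
  generalize (p - m) / (p - 1) = α at hkato hexp ⊢
  constructor
  · have hflux := (eventually_ne_nhds hx).mono fun y hy =>
      norm_gradient_rpow_smul_gradient_norm_rpow (E := EuclideanSpace ℝ (Fin m)) α p hy
    rw [diverg_congr hflux, hexp,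
      diverg_const_smul _ (hasFDerivAt_norm_rpow_smul _ hx).differentiableAt,
      diverg_norm_rpow_smul _ hx]
    ring
  · rw [sum_sum_sq_hessEntry_norm_rpow α hx, norm_gradient_norm_gradient_norm_rpow α hx, mul_pow,
      mul_pow, sq_abs, sq_abs]
    linear_combination (-(α ^ 2 * (‖x‖ ^ (α - 2)) ^ 2)) * hkato

/-- `u(x) = |x|^((p-m)/(p-1))` on `ℝ^m \ {0}`, `p ≠ m`, is `p`-harmonic and satisfies
`|∇²u|² = (1 + (p-1)²/(m-1)) |∇|∇u||²`. -/
theorem power_norm_p_harmonic_and_kato_equality (m : ℕ) (hm : 2 ≤ m) (p : ℝ)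
    (hp : 1 < p) (hpm : p ≠ (m : ℝ))
    (x : EuclideanSpace ℝ (Fin m)) (hx : x ≠ 0) :
    diverg (fun y =>
        ‖gradient (fun z : EuclideanSpace ℝ (Fin m) => ‖z‖ ^ ((p - m) / (p - 1))) y‖ ^ (p - 2)
        • gradient (fun z : EuclideanSpace ℝ (Fin m) => ‖z‖ ^ ((p - m) / (p - 1))) y) x = 0 ∧
    ∑ i, ∑ j,
        hessEntry (fun z : EuclideanSpace ℝ (Fin m) => ‖z‖ ^ ((p - m) / (p - 1))) x i j ^ 2
      = (1 + (p - 1) ^ 2 / ((m : ℝ) - 1)) * ‖gradient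
          (fun y => ‖gradient
            (fun z : EuclideanSpace ℝ (Fin m) => ‖z‖ ^ ((p - m) / (p - 1))) y‖) x‖ ^ 2 :=
  power_norm_p_harmonic_and_kato_equality_general m p hp x hx
end

section
/- Let 2 < p ≤ 4 and ε > 0. For every δ₁ > 0 and all vectors X, Y in ℝ^n with |X| ≥ |Y|, one has (|X|² + ε)^{p/2} - (|Y|² + ε)^{p/2} ≤ (1 + pε/δ₁²)(|X|^p - |Y|^p) + (pε/δ₁²) δ₁^p. -/
/-!
Put `s = p / 2 ∈ (1, 2]`, `A = ‖Y‖²`, `B = ‖X‖²`, `D = δ₁²`. Since `x ^ (s - 1)` is concave, the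
first-order Taylor remainder `(x + ε) ^ s - x ^ s - s ε x ^ (s - 1)` decreases in `x`, so the
increment of `(x + ε) ^ s` from `A` to `B` exceeds that of `x ^ s` by at most
`s ε (B ^ (s - 1) - A ^ (s - 1))`. Finally `D (B ^ (s - 1) - A ^ (s - 1)) ≤ B ^ s - A ^ s + D ^ s`,
which gives the estimate even with `p ε / (2 δ₁²)` in place of `p ε / δ₁²`.
-/

open Real Set

namespace Real

theorem rpow_eq_mul_rpow_sub_one {x : ℝ} (hx : 0 ≤ x) {s : ℝ} (hs : 1 ≤ s) :
    x ^ s = x * x ^ (s - 1) := by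
  rw [← rpow_one_add' hx (by linarith), add_sub_cancel]

theorem add_rpow_le_rpow_add_mul_rpow_sub_one {q x ε : ℝ} (hq0 : 0 ≤ q) (hq1 : q ≤ 1)
    (hx : 0 < x) (hε : 0 ≤ ε) : (x + ε) ^ q ≤ x ^ q + q * ε * x ^ (q - 1) := by
  have bernoulli : (1 + ε / x) ^ q ≤ 1 + q * (ε / x) :=
    rpow_one_add_le_one_add_mul_self (by linarith [div_nonneg hε hx.le]) hq0 hq1
  calc (x + ε) ^ q = x ^ q * (1 + ε / x) ^ q := by
        rw [← mul_rpow hx.le (by positivity), mul_add, mul_div_cancel₀ _ hx.ne', mul_one]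
    _ ≤ x ^ q * (1 + q * (ε / x)) := by gcongr
    _ = x ^ q + q * ε * x ^ (q - 1) := by rw [rpow_sub_one hx.ne']; ring

theorem antitoneOn_add_rpow_sub_rpow_sub_mul_rpow_sub_one {s ε : ℝ} (hs1 : 1 ≤ s) (hs2 : s ≤ 2)
    (hε : 0 ≤ ε) :
    AntitoneOn (fun x : ℝ => (x + ε) ^ s - x ^ s - s * ε * x ^ (s - 1)) (Ici 0) := by
  refine antitoneOn_of_hasDerivWithinAt_nonpos (convex_Ici 0)
    (f' := fun x => s * (x + ε) ^ (s - 1) - s * x ^ (s - 1) - s * ε * ((s - 1) * x ^ (s - 1 - 1)))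
    ?_ (fun x hx => ?_) (fun x hx => ?_)
  · have hpow : ∀ q : ℝ, 0 ≤ q → Continuous fun x : ℝ => x ^ q := fun q => continuous_rpow_const
    exact ((((hpow s (by linarith)).comp (continuous_add_const ε)).sub (hpow s (by linarith))).sub
      ((hpow (s - 1) (by linarith)).const_mul (s * ε))).continuousOn
  all_goals rw [interior_Ici, mem_Ioi] at hx
  · have h1 : HasDerivAt (fun x : ℝ => (x + ε) ^ s) (s * (x + ε) ^ (s - 1)) x := by
      simpa using ((hasDerivAt_id x).add_const ε).rpow_const (p := s) (Or.inr hs1)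
    exact ((h1.sub (hasDerivAt_rpow_const (Or.inl hx.ne'))).sub
      ((hasDerivAt_rpow_const (Or.inl hx.ne')).const_mul (s * ε))).hasDerivWithinAt
  · have tangent := add_rpow_le_rpow_add_mul_rpow_sub_one (by linarith : 0 ≤ s - 1)
      (by linarith : s - 1 ≤ 1) hx hε
    have hs0 : 0 ≤ s := by linarith
    nlinarith

theorem mul_rpow_sub_one_sub_le {s D A B : ℝ} (hs : 1 ≤ s) (hD : 0 ≤ D) (hA : 0 ≤ A)
    (hAB : A ≤ B) : D * (B ^ (s - 1) - A ^ (s - 1)) ≤ B ^ s - A ^ s + D ^ s := by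
  have hB := hA.trans hAB
  rw [rpow_eq_mul_rpow_sub_one hA hs, rpow_eq_mul_rpow_sub_one hB hs,
    rpow_eq_mul_rpow_sub_one hD hs]
  have ht : 0 ≤ s - 1 := by linarith
  have hAB' : A ^ (s - 1) ≤ B ^ (s - 1) := rpow_le_rpow hA hAB ht
  have hA0 := rpow_nonneg hA (s - 1)
  have hD0 := rpow_nonneg hD (s - 1)
  rcases le_total D A with hDA | hAD
  · nlinarith [mul_le_mul hAB' (sub_le_sub_right hAB D) (sub_nonneg.2 hDA) (hA0.trans hAB')]
  · have same_sign : 0 ≤ (B ^ (s - 1) - D ^ (s - 1)) * (B - D) := by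
      rcases le_total D B with hDB | hBD
      · exact mul_nonneg (sub_nonneg.2 (rpow_le_rpow hD hDB ht)) (sub_nonneg.2 hDB)
      · exact mul_nonneg_of_nonpos_of_nonpos (sub_nonpos.2 (rpow_le_rpow hB hBD ht))
          (sub_nonpos.2 hBD)
    nlinarith [mul_nonneg hA0 (sub_nonneg.2 hAD)]

theorem add_rpow_sub_add_rpow_le {s ε D A B : ℝ} (hs1 : 1 ≤ s) (hs2 : s ≤ 2) (hε : 0 ≤ ε)
    (hD : 0 < D) (hA : 0 ≤ A) (hAB : A ≤ B) :
    (B + ε) ^ s - (A + ε) ^ s ≤ (1 + s * ε / D) * (B ^ s - A ^ s) + s * ε / D * D ^ s := by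
  have taylor := antitoneOn_add_rpow_sub_rpow_sub_mul_rpow_sub_one hs1 hs2 hε
    (mem_Ici.2 hA) (mem_Ici.2 (hA.trans hAB)) hAB
  have gap : s * ε * (B ^ (s - 1) - A ^ (s - 1)) ≤ s * ε / D * (B ^ s - A ^ s + D ^ s) := by
    calc s * ε * (B ^ (s - 1) - A ^ (s - 1))
        = s * ε / D * (D * (B ^ (s - 1) - A ^ (s - 1))) := by field_simp
      _ ≤ s * ε / D * (B ^ s - A ^ s + D ^ s) := by
        gcongr
        exact mul_rpow_sub_one_sub_le hs1 hD.le hA hAB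
  simp only at taylor
  linarith

end Real

/-- For `2 < p ≤ 4`, `ε > 0`, `δ₁ > 0` and vectors with `|X| ≥ |Y|`:
`(|X|²+ε)^(p/2) - (|Y|²+ε)^(p/2) ≤ (1 + pε/δ₁²)(|X|^p - |Y|^p) + (pε/δ₁²) δ₁^p`. -/
theorem perturbed_energy_density_estimate (p ε : ℝ) (hp : 2 < p) (hp4 : p ≤ 4)
    (hε : 0 < ε) (δ₁ : ℝ) (hδ : 0 < δ₁)
    (n : ℕ) (X Y : EuclideanSpace ℝ (Fin n)) (hXY : ‖Y‖ ≤ ‖X‖) :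
    (‖X‖ ^ 2 + ε) ^ (p / 2) - (‖Y‖ ^ 2 + ε) ^ (p / 2)
      ≤ (1 + p * ε / δ₁ ^ 2) * (‖X‖ ^ p - ‖Y‖ ^ p) + (p * ε / δ₁ ^ 2) * δ₁ ^ p := by
  have sq_rpow_half : ∀ t : ℝ, 0 ≤ t → (t ^ 2) ^ (p / 2) = t ^ p := fun t ht => by
    rw [← rpow_natCast_mul ht]; push_cast; ring_nf
  have key := add_rpow_sub_add_rpow_le (s := p / 2) (D := δ₁ ^ 2) (by linarith) (by linarith)
    hε.le (by positivity) (sq_nonneg ‖Y‖) (pow_le_pow_left₀ (norm_nonneg Y) hXY 2)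
  rw [sq_rpow_half _ (norm_nonneg X), sq_rpow_half _ (norm_nonneg Y),
    sq_rpow_half _ hδ.le] at key
  refine key.trans ?_
  have hXYp : 0 ≤ ‖X‖ ^ p - ‖Y‖ ^ p :=
    sub_nonneg.2 (rpow_le_rpow (norm_nonneg Y) hXY (by linarith))
  have half_le : p / 2 ≤ p := by linarith
  gcongr
end
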